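/- arXiv:1206.2442 — 2 statements merged into one kernel-verified Lean document; each statement's English description precedes it below -/
import Mathlib

section
/- Let h > 0, λ > 0, x_i ∈ ℝ, x_{i+1} = x_i + h, and let y_i, y_{i+1}, M_i, M_{i+1} ∈ ℝ. Define S : ℝ → ℝ by S(x) = (h²/(λ² sinh λ))·[M_{i+1}·sinh(λ(x−x_i)/h) + M_i·sinh(λ(x_{i+1}−x)/h)] − (h²/λ²)·[((x−x_i)/h)·(M_{i+1} − (λ²/h²)·y_{i+1}) + ((x_{i+1}−x)/h)·(M_i − (λ²/h²)·y_i)]. Then the derivative of S at the left endpoint satisfies S'(x_i) = (y_{i+1} − y_i)/h − (h/λ²)·[(1 − λ/sinh λ)·M_{i+1} + (λ·coth λ − 1)·M_i]. -/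
open Real

noncomputable def tensionSplinePiece (h lam xi xi1 y0 y1 M0 M1 : ℝ) (x : ℝ) : ℝ :=
  (h ^ 2 / (lam ^ 2 * sinh lam)) *
      (M1 * sinh (lam * (x - xi) / h) + M0 * sinh (lam * (xi1 - x) / h)) -
    (h ^ 2 / lam ^ 2) *
      (((x - xi) / h) * (M1 - (lam ^ 2 / h ^ 2) * y1) +
        ((xi1 - x) / h) * (M0 - (lam ^ 2 / h ^ 2) * y0))

theorem hasDerivAt_tensionSplinePiece (h lam xi xi1 y0 y1 M0 M1 x : ℝ) :
    HasDerivAt (tensionSplinePiece h lam xi xi1 y0 y1 M0 M1)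
      ((h ^ 2 / (lam ^ 2 * sinh lam)) * (lam / h) *
          (M1 * cosh (lam * (x - xi) / h) - M0 * cosh (lam * (xi1 - x) / h)) -
        (h ^ 2 / lam ^ 2) * ((M1 - (lam ^ 2 / h ^ 2) * y1) - (M0 - (lam ^ 2 / h ^ 2) * y0)) / h) x := by
  have hL1 : HasDerivAt (fun x => (x - xi) / h) (1 / h) x :=
    ((hasDerivAt_id x).sub_const xi).div_const h
  have hL2 : HasDerivAt (fun x => (xi1 - x) / h) (-1 / h) x :=
    ((hasDerivAt_id x).const_sub xi1).div_const h
  have hA1 : HasDerivAt (fun x => lam * (x - xi) / h) (lam * 1 / h) x :=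
    (((hasDerivAt_id x).sub_const xi).const_mul lam).div_const h
  have hA2 : HasDerivAt (fun x => lam * (xi1 - x) / h) (lam * -1 / h) x :=
    (((hasDerivAt_id x).const_sub xi1).const_mul lam).div_const h
  refine ((((hA1.sinh.const_mul M1).add (hA2.sinh.const_mul M0)).const_mul
        (h ^ 2 / (lam ^ 2 * sinh lam))).sub
    (((hL1.mul_const (M1 - (lam ^ 2 / h ^ 2) * y1)).add
      (hL2.mul_const (M0 - (lam ^ 2 / h ^ 2) * y0))).const_mul (h ^ 2 / lam ^ 2))).congr_deriv ?_
  ring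

theorem deriv_tensionSplinePiece_left {h lam xi xi1 : ℝ} (hh : h ≠ 0) (hlam : lam ≠ 0)
    (hx : xi1 = xi + h) (y0 y1 M0 M1 : ℝ) :
    deriv (tensionSplinePiece h lam xi xi1 y0 y1 M0 M1) xi = (y1 - y0) / h -
      (h / lam ^ 2) * ((1 - lam / sinh lam) * M1 + (lam * (cosh lam / sinh lam) - 1) * M0) := by
  have hsinh : sinh lam ≠ 0 := sinh_ne_zero.mpr hlam
  rw [(hasDerivAt_tensionSplinePiece h lam xi xi1 y0 y1 M0 M1 xi).deriv, hx]
  have hat_right : lam * (xi + h - xi) / h = lam := by field_simp; ring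
  rw [sub_self, mul_zero, zero_div, cosh_zero, hat_right]
  field_simp
  ring

theorem tension_spline_deriv_left_endpoint
    (h lam xi xi1 : ℝ) (hh : 0 < h) (hlam : 0 < lam) (hx : xi1 = xi + h)
    (y0 y1 M0 M1 : ℝ)
    (S : ℝ → ℝ)
    (hS : ∀ x, S x =
      (h ^ 2 / (lam ^ 2 * Real.sinh lam)) *
        (M1 * Real.sinh (lam * (x - xi) / h) + M0 * Real.sinh (lam * (xi1 - x) / h)) -
      (h ^ 2 / lam ^ 2) *
        (((x - xi) / h) * (M1 - (lam ^ 2 / h ^ 2) * y1) +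
         ((xi1 - x) / h) * (M0 - (lam ^ 2 / h ^ 2) * y0))) :
    deriv S xi = (y1 - y0) / h -
      (h / lam ^ 2) * ((1 - lam / Real.sinh lam) * M1 +
        (lam * (Real.cosh lam / Real.sinh lam) - 1) * M0) := by
  have hS_eq : S = tensionSplinePiece h lam xi xi1 y0 y1 M0 M1 := funext hS
  rw [hS_eq]
  exact deriv_tensionSplinePiece_left hh.ne' hlam.ne' hx y0 y1 M0 M1
end

section
/- Let y : ℝ → ℝ be eight times continuously differentiable, let x ∈ ℝ, and let λ₁, λ₂ ∈ ℝ. Define T(h) = [y(x+h) − 2y(x) + y(x−h)] − h²·[λ₁·y''(x−h) + 2λ₂·y''(x) + λ₁·y''(x+h)]. Then as h → 0, T(h) = (1 − 2(λ₁ + λ₂))·h²·y''(x) + (1/12 − λ₁)·h⁴·y⁽⁴⁾(x) + (1/360 − λ₁/12)·h⁶·y⁽⁶⁾(x) + O(h⁸). -/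
open Filter Topology Asymptotics

open scoped Nat

/-! Taylor's theorem with Peano remainder gives, for `f` of class `C^{2m}`,
`f (x + h) + f (x - h) = ∑_{j<m} 2 h^{2j}/(2j)! f^{(2j)}(x) + O(h^{2m})`,
the odd terms cancelling. Applied to `y` with `m = 4` and to `y''` with `m = 3` (the latter
multiplied by `λ₁ h²`), it leaves `T(h)` minus the claimed expansion equal to `O(h⁸)` plus a
polynomial in `h` that vanishes identically. -/

section

variable {𝕜 F : Type*} [NontriviallyNormedField 𝕜] [NormedAddCommGroup F] [NormedSpace 𝕜 F]

theorem iteratedDeriv_iteratedDeriv (m n : ℕ) (f : 𝕜 → F) :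
    iteratedDeriv m (iteratedDeriv n f) = iteratedDeriv (m + n) f := by
  simp only [iteratedDeriv_eq_iterate, Function.iterate_add]; rfl

theorem ContDiff.iteratedDeriv_of_add {n k : ℕ} {f : 𝕜 → F}
    (hf : ContDiff 𝕜 (n + k : ℕ) f) : ContDiff 𝕜 n (iteratedDeriv k f) := by
  simpa only [iteratedDeriv_eq_iterate] using hf.iterate_deriv' n k

end

section

variable {E : Type*} [NormedAddCommGroup E] [NormedSpace ℝ E] {f : ℝ → E} {n : ℕ}

theorem taylor_shift_isBigO (hf : ContDiff ℝ n f) (x : ℝ) :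
    (fun h : ℝ => f (x + h) - ∑ k ∈ Finset.range n, (h ^ k / k !) • iteratedDeriv k f x)
      =O[𝓝 0] (· ^ n) := by
  have hshift : Tendsto (fun h : ℝ => x + h) (𝓝 0) (𝓝 x) := by
    simpa using tendsto_const_nhds.add (tendsto_id (x := 𝓝 (0 : ℝ)))
  have hrem := ((taylor_isLittleO_univ hf (x₀ := x)).isBigO.comp_tendsto hshift).congr_right
    (g₂ := (· ^ n)) (by simp)
  -- `taylorWithinEval f n` also contains the `h ^ n` term, which is itself `O(h ^ n)`.
  have htop : (fun h : ℝ => (h ^ n / n !) • iteratedDeriv n f x) =O[𝓝 0] (· ^ n) :=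
    ((isBigO_const_mul_self (n ! : ℝ)⁻¹ (· ^ n) _).smul
      (isBigO_const_const (iteratedDeriv n f x) one_ne_zero _)).congr
        (fun h => by simp only [div_eq_inv_mul]) (by simp)
  refine (hrem.add htop).congr (fun h => ?_) (fun h => by simp)
  simp only [Function.comp_apply, taylor_within_apply, iteratedDerivWithin_univ,
    Finset.sum_range_succ, add_sub_cancel_left, div_eq_inv_mul]
  abel

theorem taylor_shift_neg_isBigO (hf : ContDiff ℝ n f) (x : ℝ) :
    (fun h : ℝ => f (x - h) - ∑ k ∈ Finset.range n, ((-h) ^ k / k !) • iteratedDeriv k f x)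
      =O[𝓝 0] (· ^ n) := by
  have hneg : Tendsto (fun h : ℝ => -h) (𝓝 0) (𝓝 0) := continuous_neg.tendsto' 0 0 neg_zero
  have := (taylor_shift_isBigO hf x).comp_tendsto hneg
  refine (this.congr_left fun h => by simp [sub_eq_add_neg]).trans ?_
  exact isBigO_of_le _ fun h => by simp

theorem sum_range_two_mul_pow_add_neg_pow_smul (v : ℕ → E) (h : ℝ) (m : ℕ) :
    ∑ k ∈ Finset.range (2 * m), (h ^ k + (-h) ^ k) • v k =
      ∑ j ∈ Finset.range m, (2 * h ^ (2 * j)) • v (2 * j) := by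
  induction m with
  | zero => simp
  | succ m ih =>
    rw [Nat.mul_succ, Finset.sum_range_succ, Finset.sum_range_succ, ih, Finset.sum_range_succ,
      (even_two_mul m).neg_pow, (even_two_mul m).add_one.neg_pow]
    simp only [add_neg_cancel, zero_smul, add_zero, two_mul (h ^ _)]

theorem taylor_symmetric_isBigO {m : ℕ} (hf : ContDiff ℝ (2 * m : ℕ) f) (x : ℝ) :
    (fun h : ℝ => f (x + h) + f (x - h) -
        ∑ j ∈ Finset.range m, (2 * h ^ (2 * j) / (2 * j)!) • iteratedDeriv (2 * j) f x)
      =O[𝓝 0] (· ^ (2 * m)) := by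
  refine ((taylor_shift_isBigO hf x).add (taylor_shift_neg_isBigO hf x)).congr_left fun h => ?_
  have hsum :=
    sum_range_two_mul_pow_add_neg_pow_smul (fun k => (k ! : ℝ)⁻¹ • iteratedDeriv k f x) h m
  simp only [smul_smul, add_mul, Finset.sum_add_distrib, add_smul] at hsum
  simp only [div_eq_mul_inv, ← hsum]
  abel

end

theorem truncation_error_expansion
    (y : ℝ → ℝ) (hy : ContDiff ℝ 8 y) (x : ℝ) (lam1 lam2 : ℝ) :
    (fun h : ℝ =>
        ((y (x + h) - 2 * y x + y (x - h)) -
          h ^ 2 * (lam1 * iteratedDeriv 2 y (x - h) + 2 * lam2 * iteratedDeriv 2 y x +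
            lam1 * iteratedDeriv 2 y (x + h))) -
        ((1 - 2 * (lam1 + lam2)) * h ^ 2 * iteratedDeriv 2 y x +
         (1 / 12 - lam1) * h ^ 4 * iteratedDeriv 4 y x +
         (1 / 360 - lam1 / 12) * h ^ 6 * iteratedDeriv 6 y x))
      =O[nhds 0] (fun h : ℝ => h ^ 8) := by
  have hy8 : ContDiff ℝ (2 * 4 : ℕ) y := hy
  have hy2 : ContDiff ℝ (2 * 3 : ℕ) (iteratedDeriv 2 y) := ContDiff.iteratedDeriv_of_add hy
  have hyE := taylor_symmetric_isBigO hy8 x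
  have hy2E :=
    ((isBigO_refl (· ^ 2) (𝓝 0)).mul (taylor_symmetric_isBigO hy2 x)).const_mul_left lam1
  refine (hyE.sub (hy2E.congr_right fun h => by ring)).congr_left fun h => ?_
  simp only [Finset.sum_range_succ, Finset.sum_range_zero, iteratedDeriv_iteratedDeriv, smul_eq_mul]
  norm_num [Nat.factorial]
  ring
end
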